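/- There exists a Lebesgue-measurable function q : [0,1] → ℝ with 0 ≤ q(t) ≤ M for all t (for some constant M > 0) such that liminf_{n→∞} sup_{(t,s)∈Δ} |exp(−∫_s^t q(y) dy) − exp(−R_n(q;t,s))| > 0. -/

import Mathlib

/-!
The indicator function of the rationals is a counterexample. It vanishes almost everywhere, so
`∫_0^1 q = 0`, while all nodes `k/n` of the Riemann sum `R_n(q;1,0)` are rational, so
`R_n(q;1,0) = 1` for every `n`. Hence the error at `(t,s) = (1,0)` is `1 - e⁻¹` for all `n ≥ 1`.
-/

open intervalIntegral Finset Filter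

/-- The left-endpoint Riemann sum `R_n(q;t,s) = ((t−s)/n)·Σ_{k<n} q(s + k(t−s)/n)`. -/
noncomputable def riemannSum (q : ℝ → ℝ) (n : ℕ) (t s : ℝ) : ℝ :=
  ((t - s) / n) * ∑ k ∈ Finset.range n, q (s + k * (t - s) / n)

/-- `sup_{(t,s) ∈ Δ} |exp(−∫_s^t q) − exp(−R_n(q;t,s))|`, the supremum of the exponential
error over the triangle `Δ = {(t,s) : 0 ≤ s ≤ t ≤ 1}`. -/
noncomputable def supExpError (q : ℝ → ℝ) (n : ℕ) : ℝ :=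
  ⨆ p : {p : ℝ × ℝ // 0 ≤ p.2 ∧ p.2 ≤ p.1 ∧ p.1 ≤ 1},
    |Real.exp (-(∫ y in p.1.2..p.1.1, q y)) - Real.exp (-(riemannSum q n p.1.1 p.1.2))|

open MeasureTheory Real

section ExpError

variable {q : ℝ → ℝ}

lemma riemannSum_nonneg (hq : ∀ y, 0 ≤ q y) (n : ℕ) {t s : ℝ} (hst : s ≤ t) :
    0 ≤ riemannSum q n t s :=
  mul_nonneg (div_nonneg (sub_nonneg.mpr hst) n.cast_nonneg) (sum_nonneg fun _ _ => hq _)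

lemma abs_exp_neg_sub_exp_neg_le_one {a b : ℝ} (ha : 0 ≤ a) (hb : 0 ≤ b) :
    |exp (-a) - exp (-b)| ≤ 1 :=
  abs_sub_le_of_nonneg_of_le (exp_pos _).le (exp_le_one_iff.mpr (neg_nonpos.mpr ha))
    (exp_pos _).le (exp_le_one_iff.mpr (neg_nonpos.mpr hb))

lemma abs_expError_le_one (hq : ∀ y, 0 ≤ q y) (n : ℕ) {t s : ℝ} (hst : s ≤ t) :
    |exp (-(∫ y in s..t, q y)) - exp (-(riemannSum q n t s))| ≤ 1 :=
  abs_exp_neg_sub_exp_neg_le_one (integral_nonneg hst fun y _ => hq y)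
    (riemannSum_nonneg hq n hst)

lemma expError_le_supExpError (hq : ∀ y, 0 ≤ q y) (n : ℕ) {t s : ℝ} (hs : 0 ≤ s)
    (hst : s ≤ t) (ht : t ≤ 1) :
    |exp (-(∫ y in s..t, q y)) - exp (-(riemannSum q n t s))| ≤ supExpError q n :=
  le_ciSup (f := fun p : {p : ℝ × ℝ // 0 ≤ p.2 ∧ p.2 ≤ p.1 ∧ p.1 ≤ 1} =>
      |exp (-(∫ y in p.1.2..p.1.1, q y)) - exp (-(riemannSum q n p.1.1 p.1.2))|)
    ⟨1, by rintro _ ⟨p, rfl⟩; exact abs_expError_le_one hq n p.2.2.1⟩ ⟨(t, s), hs, hst, ht⟩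

lemma supExpError_le_one (hq : ∀ y, 0 ≤ q y) (n : ℕ) : supExpError q n ≤ 1 :=
  have : Nonempty {p : ℝ × ℝ // 0 ≤ p.2 ∧ p.2 ≤ p.1 ∧ p.1 ≤ 1} :=
    ⟨⟨(0, 0), le_rfl, le_rfl, zero_le_one⟩⟩
  ciSup_le fun p => abs_expError_le_one hq n p.2.2.1

lemma le_liminf_supExpError (hq : ∀ y, 0 ≤ q y) {c : ℝ}
    (hc : ∀ᶠ n in atTop, c ≤ supExpError q n) :
    c ≤ atTop.liminf (fun n : ℕ => supExpError q n) :=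
  le_liminf_of_le (IsBoundedUnder.isCoboundedUnder_ge <|
    isBoundedUnder_of ⟨1, supExpError_le_one hq⟩) hc

end ExpError

noncomputable def ratIndicator : ℝ → ℝ :=
  Set.indicator (Set.range ((↑) : ℚ → ℝ)) 1

lemma ratIndicator_mem_Icc (y : ℝ) : ratIndicator y ∈ Set.Icc 0 1 := by
  by_cases h : y ∈ Set.range ((↑) : ℚ → ℝ) <;> simp [ratIndicator, h]

lemma ratIndicator_ratCast (x : ℚ) : ratIndicator x = 1 :=
  Set.indicator_of_mem (Set.mem_range_self x) 1

lemma measurable_ratIndicator : Measurable ratIndicator :=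
  measurable_one.indicator (Set.countable_range _).measurableSet

lemma integral_ratIndicator (a b : ℝ) : ∫ y in a..b, ratIndicator y = 0 := by
  have hnull : volume (Set.range ((↑) : ℚ → ℝ)) = 0 := (Set.countable_range _).measure_zero _
  refine integral_zero_ae ?_
  filter_upwards [measure_eq_zero_iff_ae_notMem.mp hnull] with y hy _
  exact Set.indicator_of_notMem hy 1

lemma riemannSum_ratIndicator {n : ℕ} (hn : n ≠ 0) (t s : ℚ) :
    riemannSum ratIndicator n t s = t - s := by
  have hnode (k : ℕ) : ratIndicator (s + k * (t - s) / n) = 1 := by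
    exact_mod_cast ratIndicator_ratCast (s + k * (t - s) / n)
  simp only [riemannSum, hnode, sum_const, card_range, nsmul_eq_mul, mul_one]
  field_simp

/-- There is a bounded measurable `q : [0,1] → ℝ`, `0 ≤ q ≤ M`, such that
`liminf_n sup_{(t,s)∈Δ} |exp(−∫_s^t q) − exp(−R_n(q;t,s))| > 0`. -/
theorem exp_riemann_error_no_convergence_measurable :
    ∃ M : ℝ, 0 < M ∧ ∃ q : ℝ → ℝ, Measurable q ∧ (∀ t, 0 ≤ q t ∧ q t ≤ M) ∧
      0 < atTop.liminf (fun n : ℕ => supExpError q n) := by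
  have hq (y : ℝ) : 0 ≤ ratIndicator y := (ratIndicator_mem_Icc y).1
  refine ⟨1, one_pos, ratIndicator, measurable_ratIndicator, ratIndicator_mem_Icc, ?_⟩
  have hpos : 0 < 1 - exp (-1) := sub_pos.mpr (exp_lt_one_iff.mpr (by norm_num))
  refine hpos.trans_le (le_liminf_supExpError hq ?_)
  filter_upwards [eventually_ne_atTop 0] with n hn
  have hsum : riemannSum ratIndicator n 1 0 = 1 := by
    simpa using riemannSum_ratIndicator hn 1 0
  have herr := expError_le_supExpError hq n le_rfl zero_le_one le_rfl
  rwa [integral_ratIndicator, hsum, neg_zero, exp_zero,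
    abs_of_nonneg (sub_nonneg.mpr (exp_le_one_iff.mpr (by norm_num)))] at herr
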